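/- arXiv:2502.00870 — 4 statements merged into one kernel-verified Lean document; each statement's English description precedes it below -/
import Mathlib

section
/- Fix a reference distribution q : A → ℝ with q(a) > 0 for all a and ∑_{a ∈ A} q(a) = 1, and define the Kullback–Leibler objective D(θ) = ∑_{a ∈ A} π_θ(a) · log(π_θ(a) / q(a)). Then D is differentiable on ℝ^d and its gradient at θ equals ∑_{a ∈ A} log(π_θ(a) / q(a)) · π_θ(a) • (f a − μ_θ). -/
open scoped RealInnerProductSpace BigOperators

/-- For the softmax policy `π θ a = exp⟪θ, f a⟫ / ∑ b, exp⟪θ, f b⟫` on a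
nonempty finite action type `A`, fix a reference distribution `q` with `q a > 0` and
`∑ a, q a = 1`, and define the KL objective `D θ = ∑ a, π θ a * log (π θ a / q a)`.
Then `D` is differentiable on `ℝ^d` and its gradient at `θ` equals
`∑ a, (log (π θ a / q a) * π θ a) • (f a - μ θ)`. -/
theorem softmax_kl_gradient {d : ℕ} (hd : 1 ≤ d) {A : Type*} [Fintype A] [Nonempty A]
    (f : A → EuclideanSpace ℝ (Fin d))
    (π : EuclideanSpace ℝ (Fin d) → A → ℝ)
    (hπ : ∀ θ a, π θ a = Real.exp ⟪θ, f a⟫ / ∑ b, Real.exp ⟪θ, f b⟫)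
    (μ : EuclideanSpace ℝ (Fin d) → EuclideanSpace ℝ (Fin d))
    (hμ : ∀ θ, μ θ = ∑ b, π θ b • f b)
    (q : A → ℝ) (hq : ∀ a, 0 < q a) (hq1 : ∑ a, q a = 1)
    (D : EuclideanSpace ℝ (Fin d) → ℝ)
    (hD : ∀ θ, D θ = ∑ a, π θ a * Real.log (π θ a / q a)) :
    Differentiable ℝ D ∧
    ∀ θ, gradient D θ = ∑ a, (Real.log (π θ a / q a) * π θ a) • (f a - μ θ) := by
  classical
  have hZpos : ∀ θ : EuclideanSpace ℝ (Fin d), 0 < ∑ b, Real.exp ⟪θ, f b⟫ := fun θ =>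
    Finset.sum_pos (fun b _ => Real.exp_pos _) Finset.univ_nonempty
  have hπpos : ∀ θ a, 0 < π θ a := fun θ a => by
    rw [hπ]; exact div_pos (Real.exp_pos _) (hZpos θ)
  have hπsum : ∀ θ, ∑ a, π θ a = 1 := fun θ => by
    simp only [hπ]
    rw [← Finset.sum_div, div_self (hZpos θ).ne']
  set g : EuclideanSpace ℝ (Fin d) → EuclideanSpace ℝ (Fin d) :=
    fun θ => ∑ a, (Real.log (π θ a / q a) * π θ a) • (f a - μ θ) with hg
  have main : ∀ θ, HasGradientAt D (g θ) θ := by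
    intro θ
    have hi : ∀ a, HasFDerivAt (fun θ' : EuclideanSpace ℝ (Fin d) => ⟪θ', f a⟫)
        (innerSL ℝ (f a)) θ := by
      intro a
      have h1 : (fun θ' : EuclideanSpace ℝ (Fin d) => ⟪θ', f a⟫)
          = fun θ' : EuclideanSpace ℝ (Fin d) => ⟪f a, θ'⟫ :=
        funext fun θ' => real_inner_comm _ _
      rw [h1]
      exact (innerSL ℝ (f a)).hasFDerivAt
    have hZ' : HasFDerivAt (fun θ' => ∑ b, Real.exp ⟪θ', f b⟫)
        (∑ b, Real.exp ⟪θ, f b⟫ • innerSL ℝ (f b)) θ :=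
      HasFDerivAt.fun_sum fun b _ => (hi b).exp
    have hlogZ : HasFDerivAt (fun θ' => Real.log (∑ b, Real.exp ⟪θ', f b⟫))
        (innerSL ℝ (μ θ)) θ := by
      have h := hZ'.log (hZpos θ).ne'
      refine h.congr_fderiv (Eq.symm ?_)
      ext v
      simp only [ContinuousLinearMap.smul_apply, ContinuousLinearMap.sum_apply,
        innerSL_apply_apply, smul_eq_mul]
      rw [hμ θ, sum_inner, Finset.mul_sum]
      refine Finset.sum_congr rfl fun b _ => ?_
      rw [real_inner_smul_left, hπ θ b]
      field_simp
    set L : A → (EuclideanSpace ℝ (Fin d) →L[ℝ] ℝ) :=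
      fun a => π θ a • (innerSL ℝ (f a) - innerSL ℝ (μ θ)) with hL
    have hLπ : ∀ a, HasFDerivAt (fun θ' => π θ' a) (L a) θ := by
      intro a
      have heq : (fun θ' => π θ' a) =
          fun θ' => Real.exp (⟪θ', f a⟫ - Real.log (∑ b, Real.exp ⟪θ', f b⟫)) := by
        funext θ'
        rw [hπ, Real.exp_sub, Real.exp_log (hZpos θ')]
      rw [heq]
      have h := ((hi a).sub hlogZ).exp
      refine h.congr_fderiv ?_
      congr 1
      show Real.exp (⟪θ, f a⟫ - Real.log (∑ b, Real.exp ⟪θ, f b⟫)) = π θ a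
      rw [Real.exp_sub, Real.exp_log (hZpos θ), ← hπ]
    set c : A → ℝ := fun a => Real.log (π θ a / q a) with hc
    have hterm : ∀ a, HasFDerivAt (fun θ' => π θ' a * Real.log (π θ' a / q a))
        ((π θ a) • ((π θ a / q a)⁻¹ • ((q a)⁻¹ • L a)) + (c a) • L a) θ := by
      intro a
      have hdivq : HasFDerivAt (fun θ' => π θ' a / q a) ((q a)⁻¹ • L a) θ := by
        have h := (hLπ a).const_mul (q a)⁻¹
        simpa only [div_eq_inv_mul] using h
      have hlog : HasFDerivAt (fun θ' => Real.log (π θ' a / q a))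
          ((π θ a / q a)⁻¹ • ((q a)⁻¹ • L a)) θ :=
        hdivq.log (div_pos (hπpos θ a) (hq a)).ne'
      exact (hLπ a).mul hlog
    have hDeq : D = fun θ' => ∑ a, π θ' a * Real.log (π θ' a / q a) := funext hD
    have hDder : HasFDerivAt D
        (∑ a, ((π θ a) • ((π θ a / q a)⁻¹ • ((q a)⁻¹ • L a)) + (c a) • L a)) θ := by
      rw [hDeq]
      exact HasFDerivAt.fun_sum fun a _ => hterm a
    rw [hasGradientAt_iff_hasFDerivAt]
    refine hDder.congr_fderiv (Eq.symm ?_)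
    ext v
    have hLv : ∀ a, L a v = π θ a * (⟪f a, v⟫ - ⟪μ θ, v⟫) := by
      intro a
      simp only [hL, ContinuousLinearMap.smul_apply, ContinuousLinearMap.sub_apply,
        innerSL_apply_apply, smul_eq_mul]
    have hsimp : ∀ a, ((π θ a) • ((π θ a / q a)⁻¹ • ((q a)⁻¹ • L a)) + (c a) • L a) v
        = (1 + c a) * (π θ a * (⟪f a, v⟫ - ⟪μ θ, v⟫)) := by
      intro a
      simp only [ContinuousLinearMap.add_apply, ContinuousLinearMap.smul_apply,
        smul_eq_mul, hLv a]
      have hπne := (hπpos θ a).ne'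
      have hqne := (hq a).ne'
      field_simp
    have hmean : ∑ a, π θ a * ⟪f a, v⟫ = ⟪μ θ, v⟫ := by
      rw [hμ θ, sum_inner]
      exact Finset.sum_congr rfl fun b _ => (real_inner_smul_left _ _ _).symm
    have lhs : (InnerProductSpace.toDual ℝ (EuclideanSpace ℝ (Fin d)) (g θ)) v
        = ∑ a, c a * (π θ a * (⟪f a, v⟫ - ⟪μ θ, v⟫)) := by
      simp only [InnerProductSpace.toDual_apply_apply, hg]
      rw [sum_inner]
      refine Finset.sum_congr rfl fun a _ => ?_
      rw [real_inner_smul_left, inner_sub_left]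
      ring
    rw [ContinuousLinearMap.sum_apply, lhs]
    have hzero : ∑ a, π θ a * (⟪f a, v⟫ - ⟪μ θ, v⟫) = 0 := by
      simp only [mul_sub]
      rw [Finset.sum_sub_distrib, hmean, ← Finset.sum_mul, hπsum, one_mul, sub_self]
    have hexpand : ∑ a, (1 + c a) * (π θ a * (⟪f a, v⟫ - ⟪μ θ, v⟫))
        = ∑ a, (π θ a * (⟪f a, v⟫ - ⟪μ θ, v⟫) + c a * (π θ a * (⟪f a, v⟫ - ⟪μ θ, v⟫))) :=
      Finset.sum_congr rfl fun a _ => by ring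
    calc ∑ a, c a * (π θ a * (⟪f a, v⟫ - ⟪μ θ, v⟫))
        = ∑ a, (1 + c a) * (π θ a * (⟪f a, v⟫ - ⟪μ θ, v⟫)) := by
          rw [hexpand, Finset.sum_add_distrib, hzero, zero_add]
      _ = ∑ a, ((π θ a) • ((π θ a / q a)⁻¹ • ((q a)⁻¹ • L a)) + (c a) • L a) v :=
          Finset.sum_congr rfl fun a _ => (hsimp a).symm
  exact ⟨fun θ => (main θ).hasFDerivAt.differentiableAt, fun θ => (main θ).gradient⟩
end

section
/- (Lemma 1, softmax case.) Suppose there exists B ≥ 0 with ‖f a‖ ≤ B for all a ∈ A, and fix a reference distribution q : A → ℝ with q(a) > 0 for all a and ∑_{a ∈ A} q(a) = 1. Define D(θ) = ∑_{a ∈ A} π_θ(a) · log(π_θ(a) / q(a)). Then the gradient of D is globally Lipschitz continuous: there exists a constant L_KL > 0 such that for all θ, θ' ∈ ℝ^d, ‖∇D(θ) − ∇D(θ')‖ ≤ L_KL · ‖θ − θ'‖. -/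
open scoped RealInnerProductSpace BigOperators


namespace SKL
set_option linter.unusedSectionVars false
variable {d : ℕ} {A : Type*} [Fintype A] [Nonempty A]

noncomputable def LL (f : A → EuclideanSpace ℝ (Fin d)) (a : A) :
    EuclideanSpace ℝ (Fin d) →L[ℝ] ℝ := innerSL ℝ (f a)

noncomputable def ww (f : A → EuclideanSpace ℝ (Fin d)) (θ : EuclideanSpace ℝ (Fin d)) (a : A) :
    ℝ := Real.exp ⟪θ, f a⟫

noncomputable def ZZ (f : A → EuclideanSpace ℝ (Fin d)) (θ : EuclideanSpace ℝ (Fin d)) : ℝ :=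
  ∑ b, ww f θ b

noncomputable def PP (f : A → EuclideanSpace ℝ (Fin d)) (θ : EuclideanSpace ℝ (Fin d)) (a : A) :
    EuclideanSpace ℝ (Fin d) →L[ℝ] ℝ :=
  ww f θ a • (-(ZZ f θ ^ 2)⁻¹ • ∑ b, ww f θ b • LL f b) + (ZZ f θ)⁻¹ • (ww f θ a • LL f a)

lemma ww_pos (f : A → EuclideanSpace ℝ (Fin d)) (θ : EuclideanSpace ℝ (Fin d)) (a : A) :
    0 < ww f θ a := Real.exp_pos _

lemma ZZ_pos (f : A → EuclideanSpace ℝ (Fin d)) (θ : EuclideanSpace ℝ (Fin d)) :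
    0 < ZZ f θ := Finset.sum_pos (fun a _ => ww_pos f θ a) Finset.univ_nonempty

lemma LL_apply (f : A → EuclideanSpace ℝ (Fin d)) (a : A) (v : EuclideanSpace ℝ (Fin d)) :
    LL f a v = ⟪v, f a⟫ := by
  simp only [LL, innerSL_apply_apply]; exact real_inner_comm _ _

lemma LL_norm {f : A → EuclideanSpace ℝ (Fin d)} {B : ℝ} (hf : ∀ a, ‖f a‖ ≤ B) (a : A) :
    ‖LL f a‖ ≤ B := by
  rw [LL, innerSL_apply_norm]; exact hf a

lemma hasW (f : A → EuclideanSpace ℝ (Fin d)) (θ : EuclideanSpace ℝ (Fin d)) (a : A) :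
    HasFDerivAt (fun θ => Real.exp ⟪θ, f a⟫) (ww f θ a • LL f a) θ := by
  have h1 : HasFDerivAt (fun θ : EuclideanSpace ℝ (Fin d) => ⟪θ, f a⟫) (LL f a) θ := by
    have h2 := (LL f a).hasFDerivAt (x := θ)
    have : (fun θ : EuclideanSpace ℝ (Fin d) => ⟪θ, f a⟫) = fun θ => LL f a θ := by
      funext v; rw [LL_apply]
    rw [this]; exact h2
  exact h1.exp

lemma hasZ (f : A → EuclideanSpace ℝ (Fin d)) (θ : EuclideanSpace ℝ (Fin d)) :
    HasFDerivAt (ZZ f) (∑ b, ww f θ b • LL f b) θ := by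
  have := HasFDerivAt.fun_sum (u := Finset.univ)
    (A := fun b θ => Real.exp ⟪θ, f b⟫) (A' := fun b => ww f θ b • LL f b) (x := θ)
    (fun b _ => hasW f θ b)
  exact this

lemma hasπ {f : A → EuclideanSpace ℝ (Fin d)} {π : EuclideanSpace ℝ (Fin d) → A → ℝ}
    (hπ : ∀ θ a, π θ a = Real.exp ⟪θ, f a⟫ / ∑ b, Real.exp ⟪θ, f b⟫)
    (θ : EuclideanSpace ℝ (Fin d)) (a : A) :
    HasFDerivAt (fun θ => π θ a) (PP f θ a) θ := by
  have hfun : (fun θ => π θ a) = fun θ => (ww f θ a) * (ZZ f θ)⁻¹ := by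
    funext θ'; rw [hπ θ' a, div_eq_mul_inv]; rfl
  rw [hfun]
  have hinv : HasFDerivAt (fun θ => (ZZ f θ)⁻¹)
      (-(ZZ f θ ^ 2)⁻¹ • ∑ b, ww f θ b • LL f b) θ := by
    have := (hasDerivAt_inv (ZZ_pos f θ).ne').comp_hasFDerivAt θ (hasZ f θ)
    exact this
  have := (hasW f θ a).mul hinv
  exact this

lemma π_eq {f : A → EuclideanSpace ℝ (Fin d)} {π : EuclideanSpace ℝ (Fin d) → A → ℝ}
    (hπ : ∀ θ a, π θ a = Real.exp ⟪θ, f a⟫ / ∑ b, Real.exp ⟪θ, f b⟫)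
    (θ : EuclideanSpace ℝ (Fin d)) (a : A) : π θ a = ww f θ a / ZZ f θ := hπ θ a

lemma π_pos {f : A → EuclideanSpace ℝ (Fin d)} {π : EuclideanSpace ℝ (Fin d) → A → ℝ}
    (hπ : ∀ θ a, π θ a = Real.exp ⟪θ, f a⟫ / ∑ b, Real.exp ⟪θ, f b⟫)
    (θ : EuclideanSpace ℝ (Fin d)) (a : A) : 0 < π θ a := by
  rw [π_eq hπ]; exact div_pos (ww_pos f θ a) (ZZ_pos f θ)

lemma π_le_one {f : A → EuclideanSpace ℝ (Fin d)} {π : EuclideanSpace ℝ (Fin d) → A → ℝ}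
    (hπ : ∀ θ a, π θ a = Real.exp ⟪θ, f a⟫ / ∑ b, Real.exp ⟪θ, f b⟫)
    (θ : EuclideanSpace ℝ (Fin d)) (a : A) : π θ a ≤ 1 := by
  rw [π_eq hπ, div_le_one (ZZ_pos f θ)]
  exact Finset.single_le_sum (fun b _ => (ww_pos f θ b).le) (Finset.mem_univ a)

lemma π_sum {f : A → EuclideanSpace ℝ (Fin d)} {π : EuclideanSpace ℝ (Fin d) → A → ℝ}
    (hπ : ∀ θ a, π θ a = Real.exp ⟪θ, f a⟫ / ∑ b, Real.exp ⟪θ, f b⟫)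
    (θ : EuclideanSpace ℝ (Fin d)) : ∑ a, π θ a = 1 := by
  have : ∑ a, π θ a = ∑ a, ww f θ a / ZZ f θ := by
    exact Finset.sum_congr rfl fun a _ => π_eq hπ θ a
  rw [this, ← Finset.sum_div]
  exact div_self (ZZ_pos f θ).ne'

lemma PP_eq {f : A → EuclideanSpace ℝ (Fin d)} {π : EuclideanSpace ℝ (Fin d) → A → ℝ}
    (hπ : ∀ θ a, π θ a = Real.exp ⟪θ, f a⟫ / ∑ b, Real.exp ⟪θ, f b⟫)
    (θ : EuclideanSpace ℝ (Fin d)) (a : A) :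
    PP f θ a = π θ a • (LL f a - ∑ b, π θ b • LL f b) := by
  have hZ := (ZZ_pos f θ).ne'
  ext v
  simp only [PP, ContinuousLinearMap.add_apply, ContinuousLinearMap.coe_smul',
    Pi.smul_apply, ContinuousLinearMap.coe_sub', Pi.sub_apply,
    ContinuousLinearMap.coe_sum', Finset.sum_apply, smul_eq_mul]
  have hsum : ∀ g : A → ℝ, ∑ b, (g b / ZZ f θ) * LL f b v
      = (∑ b, g b * LL f b v) / ZZ f θ := by
    intro g; rw [Finset.sum_div]
    exact Finset.sum_congr rfl fun b _ => by ring
  rw [π_eq hπ]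
  have h2 : ∑ b, π θ b * LL f b v = (∑ b, ww f θ b * LL f b v) / ZZ f θ := by
    rw [← hsum]; exact Finset.sum_congr rfl fun b _ => by rw [π_eq hπ]
  rw [h2]
  field_simp
  ring

lemma PP_norm {f : A → EuclideanSpace ℝ (Fin d)} {π : EuclideanSpace ℝ (Fin d) → A → ℝ}
    (hπ : ∀ θ a, π θ a = Real.exp ⟪θ, f a⟫ / ∑ b, Real.exp ⟪θ, f b⟫)
    {B : ℝ} (hf : ∀ a, ‖f a‖ ≤ B)
    (θ : EuclideanSpace ℝ (Fin d)) (a : A) :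
    ‖PP f θ a‖ ≤ 2 * B * π θ a := by
  rw [PP_eq hπ]
  rw [norm_smul (π θ a) (LL f a - ∑ b, π θ b • LL f b), Real.norm_eq_abs,
    abs_of_pos (π_pos hπ θ a)]
  have h1 : ‖∑ b, π θ b • LL f b‖ ≤ B := by
    calc ‖∑ b, π θ b • LL f b‖ ≤ ∑ b, ‖π θ b • LL f b‖ := norm_sum_le _ _
    _ ≤ ∑ b, π θ b * B := by
        refine Finset.sum_le_sum fun b _ => ?_
        rw [norm_smul (π θ b) (LL f b), Real.norm_eq_abs, abs_of_pos (π_pos hπ θ b)]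
        exact mul_le_mul_of_nonneg_left (LL_norm hf b) (π_pos hπ θ b).le
    _ = B := by rw [← Finset.sum_mul, π_sum hπ, one_mul]
  have h2 : ‖LL f a - ∑ b, π θ b • LL f b‖ ≤ 2 * B := by
    calc ‖LL f a - ∑ b, π θ b • LL f b‖ ≤ ‖LL f a‖ + ‖∑ b, π θ b • LL f b‖ := norm_sub_le _ _
    _ ≤ B + B := add_le_add (LL_norm hf a) h1
    _ = 2 * B := by ring
  calc π θ a * ‖LL f a - ∑ b, π θ b • LL f b‖ ≤ π θ a * (2 * B) :=
        mul_le_mul_of_nonneg_left h2 (π_pos hπ θ a).le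
  _ = 2 * B * π θ a := by ring

lemma hasLogRatio {f : A → EuclideanSpace ℝ (Fin d)} {π : EuclideanSpace ℝ (Fin d) → A → ℝ}
    (hπ : ∀ θ a, π θ a = Real.exp ⟪θ, f a⟫ / ∑ b, Real.exp ⟪θ, f b⟫)
    {q : A → ℝ} (hq : ∀ a, 0 < q a)
    (θ : EuclideanSpace ℝ (Fin d)) (a : A) :
    HasFDerivAt (fun θ => Real.log (π θ a / q a)) ((π θ a)⁻¹ • PP f θ a) θ := by
  have h0 : (fun θ => π θ a / q a) = fun θ => (q a)⁻¹ * π θ a := by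
    funext θ'; rw [div_eq_inv_mul]
  have h1 : HasFDerivAt (fun θ => π θ a / q a) ((q a)⁻¹ • PP f θ a) θ := by
    rw [h0]; exact (hasπ hπ θ a).const_mul _
  have h2 := h1.log (div_ne_zero (π_pos hπ θ a).ne' (hq a).ne')
  refine h2.congr_fderiv ?_
  rw [smul_smul]
  congr 1
  rw [div_eq_mul_inv, mul_inv, inv_inv, mul_assoc,
    mul_inv_cancel₀ (hq a).ne', mul_one]

noncomputable def ss (π : EuclideanSpace ℝ (Fin d) → A → ℝ) (q : A → ℝ)
    (D : EuclideanSpace ℝ (Fin d) → ℝ) (θ : EuclideanSpace ℝ (Fin d)) (a : A) : ℝ :=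
  π θ a * (Real.log (π θ a / q a) - D θ)

lemma hasD {f : A → EuclideanSpace ℝ (Fin d)} {π : EuclideanSpace ℝ (Fin d) → A → ℝ}
    (hπ : ∀ θ a, π θ a = Real.exp ⟪θ, f a⟫ / ∑ b, Real.exp ⟪θ, f b⟫)
    {q : A → ℝ} (hq : ∀ a, 0 < q a)
    {D : EuclideanSpace ℝ (Fin d) → ℝ}
    (hD : ∀ θ, D θ = ∑ a, π θ a * Real.log (π θ a / q a))
    (θ : EuclideanSpace ℝ (Fin d)) :
    HasFDerivAt D (∑ a, (PP f θ a + Real.log (π θ a / q a) • PP f θ a)) θ := by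
  have h0 : D = fun θ => ∑ a, π θ a * Real.log (π θ a / q a) := funext hD
  rw [h0]
  refine HasFDerivAt.fun_sum fun a _ => ?_
  have := (hasπ hπ θ a).mul (hasLogRatio hπ hq θ a)
  refine this.congr_fderiv ?_
  rw [smul_smul, mul_inv_cancel₀ (π_pos hπ θ a).ne', one_smul]

lemma Draw_eq {f : A → EuclideanSpace ℝ (Fin d)} {π : EuclideanSpace ℝ (Fin d) → A → ℝ}
    (hπ : ∀ θ a, π θ a = Real.exp ⟪θ, f a⟫ / ∑ b, Real.exp ⟪θ, f b⟫)
    {q : A → ℝ} {D : EuclideanSpace ℝ (Fin d) → ℝ}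
    (hD : ∀ θ, D θ = ∑ a, π θ a * Real.log (π θ a / q a))
    (θ : EuclideanSpace ℝ (Fin d)) :
    ∑ a, (PP f θ a + Real.log (π θ a / q a) • PP f θ a)
      = ∑ a, ss π q D θ a • LL f a := by
  ext v
  simp only [ContinuousLinearMap.coe_sum', Finset.sum_apply, ContinuousLinearMap.add_apply,
    ContinuousLinearMap.coe_smul', Pi.smul_apply, smul_eq_mul]
  set ℓ : A → ℝ := fun b => LL f b v with hℓ
  set T : ℝ := ∑ b, π θ b * ℓ b with hT
  set c : A → ℝ := fun a => Real.log (π θ a / q a) with hc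
  have hPv : ∀ a, PP f θ a v = π θ a * ℓ a - π θ a * T := by
    intro a
    rw [PP_eq hπ]
    simp only [ContinuousLinearMap.coe_smul', Pi.smul_apply, ContinuousLinearMap.coe_sub',
      Pi.sub_apply, ContinuousLinearMap.coe_sum', Finset.sum_apply, smul_eq_mul]
    rw [mul_sub, hT, Finset.mul_sum]
  have hsum1 : ∑ a, π θ a = 1 := π_sum hπ θ
  have hsum2 : ∑ a, π θ a * c a = D θ := (hD θ).symm
  have key : ∀ a, PP f θ a v + c a * PP f θ a v
      = ((1 + D θ) * (π θ a * ℓ a) - (π θ a + π θ a * c a) * T)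
        + (π θ a * (c a - D θ)) * ℓ a := by
    intro a; rw [hPv a]; ring
  calc ∑ a, (PP f θ a v + c a * PP f θ a v)
      = ∑ a, (((1 + D θ) * (π θ a * ℓ a) - (π θ a + π θ a * c a) * T)
          + (π θ a * (c a - D θ)) * ℓ a) := Finset.sum_congr rfl fun a _ => key a
    _ = (∑ a, ((1 + D θ) * (π θ a * ℓ a) - (π θ a + π θ a * c a) * T))
          + ∑ a, (π θ a * (c a - D θ)) * ℓ a := Finset.sum_add_distrib
    _ = ((1 + D θ) * T - (1 + D θ) * T) + ∑ a, (π θ a * (c a - D θ)) * ℓ a := by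
        congr 1
        rw [Finset.sum_sub_distrib, ← Finset.mul_sum, ← Finset.sum_mul, ← hT]
        congr 2
        rw [Finset.sum_add_distrib, hsum1, hsum2]
    _ = ∑ a, ss π q D θ a * ℓ a := by
        rw [sub_self, zero_add]
        exact Finset.sum_congr rfl fun a _ => rfl

lemma hasD' {f : A → EuclideanSpace ℝ (Fin d)} {π : EuclideanSpace ℝ (Fin d) → A → ℝ}
    (hπ : ∀ θ a, π θ a = Real.exp ⟪θ, f a⟫ / ∑ b, Real.exp ⟪θ, f b⟫)
    {q : A → ℝ} (hq : ∀ a, 0 < q a)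
    {D : EuclideanSpace ℝ (Fin d) → ℝ}
    (hD : ∀ θ, D θ = ∑ a, π θ a * Real.log (π θ a / q a))
    (θ : EuclideanSpace ℝ (Fin d)) :
    HasFDerivAt D (∑ a, ss π q D θ a • LL f a) θ := by
  rw [← Draw_eq hπ hD θ]
  exact hasD hπ hq hD θ

lemma gradD {f : A → EuclideanSpace ℝ (Fin d)} {π : EuclideanSpace ℝ (Fin d) → A → ℝ}
    (hπ : ∀ θ a, π θ a = Real.exp ⟪θ, f a⟫ / ∑ b, Real.exp ⟪θ, f b⟫)
    {q : A → ℝ} (hq : ∀ a, 0 < q a)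
    {D : EuclideanSpace ℝ (Fin d) → ℝ}
    (hD : ∀ θ, D θ = ∑ a, π θ a * Real.log (π θ a / q a))
    (θ : EuclideanSpace ℝ (Fin d)) :
    gradient D θ = ∑ a, ss π q D θ a • f a := by
  have h : HasGradientAt D (∑ a, ss π q D θ a • f a) θ := by
    rw [hasGradientAt_iff_hasFDerivAt]
    have heq : (InnerProductSpace.toDual ℝ (EuclideanSpace ℝ (Fin d)))
        (∑ a, ss π q D θ a • f a) = ∑ a, ss π q D θ a • LL f a := by
      ext v
      simp only [InnerProductSpace.toDual_apply_apply, ContinuousLinearMap.coe_sum',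
        Finset.sum_apply, ContinuousLinearMap.coe_smul', Pi.smul_apply, smul_eq_mul]
      rw [sum_inner]
      refine Finset.sum_congr rfl fun a _ => ?_
      rw [real_inner_smul_left, LL_apply, real_inner_comm]
    rw [heq]
    exact hasD' hπ hq hD θ
  exact h.gradient

lemma hasS {f : A → EuclideanSpace ℝ (Fin d)} {π : EuclideanSpace ℝ (Fin d) → A → ℝ}
    (hπ : ∀ θ a, π θ a = Real.exp ⟪θ, f a⟫ / ∑ b, Real.exp ⟪θ, f b⟫)
    {q : A → ℝ} (hq : ∀ a, 0 < q a)
    {D : EuclideanSpace ℝ (Fin d) → ℝ}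
    (hD : ∀ θ, D θ = ∑ a, π θ a * Real.log (π θ a / q a))
    (θ : EuclideanSpace ℝ (Fin d)) (a : A) :
    HasFDerivAt (fun θ => ss π q D θ a)
      (π θ a • (((π θ a)⁻¹ • PP f θ a) - ∑ b, ss π q D θ b • LL f b)
        + (Real.log (π θ a / q a) - D θ) • PP f θ a) θ := by
  have h1 := (hasLogRatio hπ hq θ a).sub (hasD' hπ hq hD θ)
  exact (hasπ hπ θ a).mul h1

lemma ss_def (π : EuclideanSpace ℝ (Fin d) → A → ℝ) (q : A → ℝ)
    (D : EuclideanSpace ℝ (Fin d) → ℝ) (θ : EuclideanSpace ℝ (Fin d)) (a : A) :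
    ss π q D θ a = π θ a * (Real.log (π θ a / q a) - D θ) := rfl

end SKL

open SKL

/-- Lemma 1, softmax case: For the softmax policy
`π θ a = exp⟪θ, f a⟫ / ∑ b, exp⟪θ, f b⟫` on a nonempty finite action type `A`, if the
feature map is bounded (`‖f a‖ ≤ B` for all `a`, with `B ≥ 0`) and `q` is a reference
distribution (`q a > 0`, `∑ a, q a = 1`), then the gradient of the KL objective
`D θ = ∑ a, π θ a * log (π θ a / q a)` is globally Lipschitz: there exists `L_KL > 0`
with `‖∇D(θ) − ∇D(θ')‖ ≤ L_KL * ‖θ − θ'‖` for all `θ, θ'`. -/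
theorem softmax_kl_gradient_lipschitz {d : ℕ} (hd : 1 ≤ d) {A : Type*} [Fintype A]
    [Nonempty A]
    (f : A → EuclideanSpace ℝ (Fin d))
    (π : EuclideanSpace ℝ (Fin d) → A → ℝ)
    (hπ : ∀ θ a, π θ a = Real.exp ⟪θ, f a⟫ / ∑ b, Real.exp ⟪θ, f b⟫)
    (B : ℝ) (hB : 0 ≤ B) (hf : ∀ a, ‖f a‖ ≤ B)
    (q : A → ℝ) (hq : ∀ a, 0 < q a) (hq1 : ∑ a, q a = 1)
    (D : EuclideanSpace ℝ (Fin d) → ℝ)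
    (hD : ∀ θ, D θ = ∑ a, π θ a * Real.log (π θ a / q a)) :
    ∃ L_KL : ℝ, 0 < L_KL ∧
      ∀ θ θ' : EuclideanSpace ℝ (Fin d),
        ‖gradient D θ - gradient D θ'‖ ≤ L_KL * ‖θ - θ'‖ := by

  classical
  set n : ℝ := (Fintype.card A : ℝ) with hn
  have hn0 : 0 ≤ n := by positivity
  set Cq : ℝ := ∑ a, |Real.log (q a)| with hCq
  have hCq0 : 0 ≤ Cq := Finset.sum_nonneg fun a _ => abs_nonneg _
  have hCqa : ∀ a, |Real.log (q a)| ≤ Cq := by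
    intro a
    rw [hCq]
    exact Finset.single_le_sum (f := fun b => |Real.log (q b)|) (fun b _ => abs_nonneg _)
      (Finset.mem_univ a)
  have hlr : ∀ θ a, Real.log (π θ a / q a) = Real.log (π θ a) - Real.log (q a) :=
    fun θ a => Real.log_div (π_pos hπ θ a).ne' (hq a).ne'
  have hπlog : ∀ θ a, π θ a * |Real.log (π θ a)| ≤ 1 := by
    intro θ a
    have h := Real.abs_log_mul_self_lt (π θ a) (π_pos hπ θ a) (π_le_one hπ θ a)
    have : π θ a * |Real.log (π θ a)| = |Real.log (π θ a) * π θ a| := by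
      rw [abs_mul, abs_of_pos (π_pos hπ θ a)]; ring
    rw [this]; exact h.le
  have hterm : ∀ θ a, |π θ a * Real.log (π θ a / q a)| ≤ 1 + Cq := by
    intro θ a
    rw [hlr, abs_mul, abs_of_pos (π_pos hπ θ a)]
    calc π θ a * |Real.log (π θ a) - Real.log (q a)|
        ≤ π θ a * (|Real.log (π θ a)| + |Real.log (q a)|) :=
          mul_le_mul_of_nonneg_left (abs_sub _ _) (π_pos hπ θ a).le
      _ = π θ a * |Real.log (π θ a)| + π θ a * |Real.log (q a)| := by ring
      _ ≤ 1 + Cq := by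
          refine add_le_add (hπlog θ a) ?_
          calc π θ a * |Real.log (q a)| ≤ 1 * |Real.log (q a)| :=
                mul_le_mul_of_nonneg_right (π_le_one hπ θ a) (abs_nonneg _)
            _ = |Real.log (q a)| := one_mul _
            _ ≤ Cq := hCqa a
  set CD : ℝ := n * (1 + Cq) with hCD
  have hCD0 : 0 ≤ CD := by positivity
  have hDb : ∀ θ, |D θ| ≤ CD := by
    intro θ
    rw [hD θ]
    calc |∑ a, π θ a * Real.log (π θ a / q a)|
        ≤ ∑ a, |π θ a * Real.log (π θ a / q a)| := Finset.abs_sum_le_sum_abs _ _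
      _ ≤ ∑ _a : A, (1 + Cq) := Finset.sum_le_sum fun a _ => hterm θ a
      _ = CD := by rw [Finset.sum_const, Finset.card_univ, nsmul_eq_mul, hCD]
  set Ms : ℝ := 1 + Cq + CD with hMs
  have hMs0 : 0 ≤ Ms := by positivity
  have hss : ∀ θ a, |ss π q D θ a| ≤ Ms := by
    intro θ a
    rw [ss_def, mul_sub]
    calc |π θ a * Real.log (π θ a / q a) - π θ a * D θ|
        ≤ |π θ a * Real.log (π θ a / q a)| + |π θ a * D θ| := abs_sub _ _
      _ ≤ (1 + Cq) + CD := by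
          refine add_le_add (hterm θ a) ?_
          rw [abs_mul, abs_of_pos (π_pos hπ θ a)]
          calc π θ a * |D θ| ≤ 1 * |D θ| :=
                mul_le_mul_of_nonneg_right (π_le_one hπ θ a) (abs_nonneg _)
            _ = |D θ| := one_mul _
            _ ≤ CD := hDb θ
      _ = Ms := hMs.symm
  have hDerivb : ∀ θ, ‖∑ b, ss π q D θ b • LL f b‖ ≤ n * (Ms * B) := by
    intro θ
    calc ‖∑ b, ss π q D θ b • LL f b‖ ≤ ∑ b, ‖ss π q D θ b • LL f b‖ := norm_sum_le _ _
      _ ≤ ∑ _b : A, Ms * B := by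
          refine Finset.sum_le_sum fun b _ => ?_
          rw [norm_smul (ss π q D θ b) (LL f b), Real.norm_eq_abs]
          exact mul_le_mul (hss θ b) (LL_norm hf b) (norm_nonneg _) hMs0
      _ = n * (Ms * B) := by rw [Finset.sum_const, Finset.card_univ, nsmul_eq_mul]
  set Ls : ℝ := 2 * B + n * (Ms * B) + 2 * B * Ms with hLs
  have hLs0 : 0 ≤ Ls := by positivity
  have hSb : ∀ (θ : EuclideanSpace ℝ (Fin d)) a,
      ‖π θ a • (((π θ a)⁻¹ • PP f θ a) - ∑ b, ss π q D θ b • LL f b)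
        + (Real.log (π θ a / q a) - D θ) • PP f θ a‖ ≤ Ls := by
    intro θ a
    have hπa := π_pos hπ θ a
    refine (norm_add_le _ _).trans ?_
    have h1 : ‖π θ a • (((π θ a)⁻¹ • PP f θ a) - ∑ b, ss π q D θ b • LL f b)‖
        ≤ 2 * B + n * (Ms * B) := by
      rw [norm_smul (π θ a) (((π θ a)⁻¹ • PP f θ a) - ∑ b, ss π q D θ b • LL f b),
        Real.norm_eq_abs, abs_of_pos hπa]
      calc π θ a * ‖((π θ a)⁻¹ • PP f θ a) - ∑ b, ss π q D θ b • LL f b‖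
          ≤ π θ a * (‖(π θ a)⁻¹ • PP f θ a‖ + ‖∑ b, ss π q D θ b • LL f b‖) :=
            mul_le_mul_of_nonneg_left (norm_sub_le _ _) hπa.le
        _ = π θ a * ‖(π θ a)⁻¹ • PP f θ a‖ + π θ a * ‖∑ b, ss π q D θ b • LL f b‖ := by ring
        _ ≤ 2 * B + n * (Ms * B) := by
            refine add_le_add ?_ ?_
            · rw [norm_smul ((π θ a)⁻¹) (PP f θ a), Real.norm_eq_abs,
                abs_of_pos (inv_pos.mpr hπa)]
              calc π θ a * ((π θ a)⁻¹ * ‖PP f θ a‖)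
                  = ‖PP f θ a‖ := by field_simp
                _ ≤ 2 * B * π θ a := PP_norm hπ hf θ a
                _ ≤ 2 * B * 1 := by
                    exact mul_le_mul_of_nonneg_left (π_le_one hπ θ a) (by positivity)
                _ = 2 * B := mul_one _
            · calc π θ a * ‖∑ b, ss π q D θ b • LL f b‖
                  ≤ 1 * ‖∑ b, ss π q D θ b • LL f b‖ :=
                    mul_le_mul_of_nonneg_right (π_le_one hπ θ a) (norm_nonneg _)
                _ = ‖∑ b, ss π q D θ b • LL f b‖ := one_mul _
                _ ≤ n * (Ms * B) := hDerivb θ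
    have h2 : ‖(Real.log (π θ a / q a) - D θ) • PP f θ a‖ ≤ 2 * B * Ms := by
      rw [norm_smul (Real.log (π θ a / q a) - D θ) (PP f θ a), Real.norm_eq_abs]
      calc |Real.log (π θ a / q a) - D θ| * ‖PP f θ a‖
          ≤ |Real.log (π θ a / q a) - D θ| * (2 * B * π θ a) :=
            mul_le_mul_of_nonneg_left (PP_norm hπ hf θ a) (abs_nonneg _)
        _ = 2 * B * (π θ a * |Real.log (π θ a / q a) - D θ|) := by ring
        _ = 2 * B * |ss π q D θ a| := by
            rw [ss_def, abs_mul, abs_of_pos hπa]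
        _ ≤ 2 * B * Ms := mul_le_mul_of_nonneg_left (hss θ a) (by positivity)
    calc _ ≤ (2 * B + n * (Ms * B)) + 2 * B * Ms := add_le_add h1 h2
      _ = Ls := hLs.symm
  have hLip : ∀ a (θ θ' : EuclideanSpace ℝ (Fin d)),
      |ss π q D θ a - ss π q D θ' a| ≤ Ls * ‖θ - θ'‖ := by
    intro a θ θ'
    have h := convex_univ.norm_image_sub_le_of_norm_hasFDerivWithin_le
      (f := fun θ => ss π q D θ a)
      (f' := fun θ => π θ a • (((π θ a)⁻¹ • PP f θ a) - ∑ b, ss π q D θ b • LL f b)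
        + (Real.log (π θ a / q a) - D θ) • PP f θ a)
      (fun x _ => (hasS hπ hq hD x a).hasFDerivWithinAt)
      (fun x _ => hSb x a) (Set.mem_univ θ') (Set.mem_univ θ)
    simpa [Real.norm_eq_abs] using h
  refine ⟨n * Ls * B + 1, by positivity, fun θ θ' => ?_⟩
  rw [gradD hπ hq hD θ, gradD hπ hq hD θ']
  have hsub : (∑ a, ss π q D θ a • f a) - (∑ a, ss π q D θ' a • f a)
      = ∑ a, (ss π q D θ a - ss π q D θ' a) • f a := by
    rw [← Finset.sum_sub_distrib]
    exact Finset.sum_congr rfl fun a _ => (sub_smul _ _ _).symm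
  rw [hsub]
  calc ‖∑ a, (ss π q D θ a - ss π q D θ' a) • f a‖
      ≤ ∑ a, ‖(ss π q D θ a - ss π q D θ' a) • f a‖ := norm_sum_le _ _
    _ ≤ ∑ _a : A, (Ls * ‖θ - θ'‖) * B := by
        refine Finset.sum_le_sum fun a _ => ?_
        rw [norm_smul (ss π q D θ a - ss π q D θ' a) (f a), Real.norm_eq_abs]
        exact mul_le_mul (hLip a θ θ') (hf a) (norm_nonneg _) (by positivity)
    _ = n * ((Ls * ‖θ - θ'‖) * B) := by
        rw [Finset.sum_const, Finset.card_univ, nsmul_eq_mul]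
    _ ≤ (n * Ls * B + 1) * ‖θ - θ'‖ := by nlinarith [norm_nonneg (θ - θ')]
end

section
/- (Core of Theorem 1: summability of weighted squared gradients.) Let E be a real inner product space (e.g., ℝ^d), let J' : E → ℝ be differentiable with L-Lipschitz gradient (L > 0) and bounded above, let the positive step sizes (αᵢ)_{i ∈ ℕ} satisfy the Robbins–Monro condition ∑_{i} αᵢ² < ∞, and let the iterates satisfy θ^{i+1} = θ^i + αᵢ • ∇J'(θ^i). Then the series ∑_{i=0}^{∞} αᵢ · ‖∇J'(θ^i)‖² converges (is finite). -/
open scoped RealInnerProductSpace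

/-- Core of Theorem 1: Let `E` be a real inner product space,
`J' : E → ℝ` differentiable with `L`-Lipschitz gradient (`L > 0`) and bounded above,
positive step sizes `(αᵢ)` with `∑ αᵢ² < ∞`, and iterates
`θ (i+1) = θ i + αᵢ • ∇J'(θ i)`. Then `∑ᵢ αᵢ * ‖∇J'(θ i)‖²` converges (is finite). -/
theorem weighted_grad_sq_summable {E : Type*} [NormedAddCommGroup E]
    [InnerProductSpace ℝ E] [CompleteSpace E]
    (J' : E → ℝ) (hJ' : Differentiable ℝ J')
    (L : ℝ) (hL : 0 < L)
    (hLip : ∀ θ θ' : E, ‖gradient J' θ - gradient J' θ'‖ ≤ L * ‖θ - θ'‖)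
    (M : ℝ) (hbdd : ∀ θ : E, J' θ ≤ M)
    (α : ℕ → ℝ) (hα : ∀ i, 0 < α i) (hα2 : Summable (fun i => (α i) ^ 2))
    (θ : ℕ → E)
    (hiter : ∀ i, θ (i + 1) = θ i + α i • gradient J' (θ i)) :
    Summable (fun i => α i * ‖gradient J' (θ i)‖ ^ 2) := by
  set g := gradient J' with hg
  -- derivative of t ↦ J'(x + t•v)
  have hd : ∀ (x v : E) (t : ℝ),
      HasDerivAt (fun t : ℝ => J' (x + t • v)) ⟪g (x + t • v), v⟫ t := by
    intro x v t
    have h1 : HasDerivAt (fun t : ℝ => x + t • v) v t := by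
      simpa using ((hasDerivAt_id t).smul_const v).const_add x
    have h2 := (hJ' (x + t • v)).hasGradientAt
    have := h2.hasFDerivAt.comp_hasDerivAt t h1
    simpa only [InnerProductSpace.toDual_apply_apply, Function.comp_def] using this
  -- descent-type inequality
  have key : ∀ x v : E, |J' (x + v) - J' x - ⟪g x, v⟫| ≤ L * ‖v‖ ^ 2 := by
    intro x v
    set h : ℝ → ℝ := fun t => J' (x + t • v) - t * ⟪g x, v⟫ with hh
    have hd' : ∀ t : ℝ, HasDerivAt h (⟪g (x + t • v) - g x, v⟫) t := by
      intro t
      have := (hd x v t).sub ((hasDerivAt_id t).mul_const (⟪g x, v⟫))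
      rw [one_mul] at this; rw [inner_sub_left]; exact this
    have hb : ∀ t ∈ Set.Icc (0:ℝ) 1, ‖⟪g (x + t • v) - g x, v⟫‖ ≤ L * ‖v‖ ^ 2 := by
      intro t ht
      calc ‖⟪g (x + t • v) - g x, v⟫‖ ≤ ‖g (x + t • v) - g x‖ * ‖v‖ := by
            simpa using abs_real_inner_le_norm (g (x + t • v) - g x) v
        _ ≤ (L * ‖t • v‖) * ‖v‖ := by
            apply mul_le_mul_of_nonneg_right _ (norm_nonneg v)
            simpa using hLip (x + t • v) x
        _ ≤ L * ‖v‖ ^ 2 := by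
            have hts : ‖t • v‖ ≤ ‖v‖ := by
              rw [norm_smul, Real.norm_eq_abs]
              have : |t| ≤ 1 := by
                rw [abs_le]; exact ⟨by linarith [ht.1], ht.2⟩
              nlinarith [norm_nonneg v]
            nlinarith [mul_le_mul_of_nonneg_right hts (norm_nonneg v), hL.le,
              norm_nonneg v, norm_nonneg (t • v)]
    have := Convex.norm_image_sub_le_of_norm_hasDerivWithin_le
      (fun t ht => (hd' t).hasDerivWithinAt) hb (convex_Icc 0 1)
      (Set.left_mem_Icc.2 zero_le_one) (Set.right_mem_Icc.2 zero_le_one)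
    simpa [hh, Real.norm_eq_abs, abs_sub_comm, sub_sub, add_comm] using this
  -- per-step inequality
  have step : ∀ i, J' (θ i) + α i * ‖g (θ i)‖ ^ 2 - L * (α i) ^ 2 * ‖g (θ i)‖ ^ 2
      ≤ J' (θ (i + 1)) := by
    intro i
    have h1 := key (θ i) (α i • g (θ i))
    have h2 : ⟪g (θ i), α i • g (θ i)⟫ = α i * ‖g (θ i)‖ ^ 2 := by
      rw [real_inner_smul_right, real_inner_self_eq_norm_sq]
    have h3 : ‖α i • g (θ i)‖ ^ 2 = (α i)^2 * ‖g (θ i)‖ ^ 2 := by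
      rw [norm_smul, mul_pow]
      simp [abs_of_pos (hα i)]
    rw [hiter i]
    rw [h2, h3, abs_le] at h1
    nlinarith [h1.1]
  -- α i → 0
  have hα0 : Filter.Tendsto α Filter.atTop (nhds 0) := by
    have h2 := hα2.tendsto_atTop_zero
    have h3 : Filter.Tendsto (fun i => Real.sqrt (α i ^ 2)) Filter.atTop (nhds 0) := by
      simpa [Function.comp_def] using (Real.continuous_sqrt.tendsto 0).comp h2
    exact h3.congr fun i => Real.sqrt_sq (hα i).le
  obtain ⟨N, hN⟩ := Filter.eventually_atTop.1
    (hα0.eventually_lt_const (by positivity : (0:ℝ) < 1 / (2 * L)))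
  -- for k ≥ N, α k * ‖g‖² ≤ 2*(J'(θ(k+1)) - J'(θ k))
  have step2 : ∀ k, N ≤ k → α k * ‖g (θ k)‖ ^ 2 ≤ 2 * (J' (θ (k + 1)) - J' (θ k)) := by
    intro k hk
    have h1 := step k
    have h2 := hN k hk
    have h3 : L * α k ≤ 1 / 2 := by
      rw [lt_div_iff₀ (by positivity)] at h2
      nlinarith
    nlinarith [sq_nonneg (‖g (θ k)‖), (hα k).le, mul_nonneg (hα k).le (sq_nonneg ‖g (θ k)‖)]
  -- summability of the tail
  have htail : Summable (fun i => α (i + N) * ‖g (θ (i + N))‖ ^ 2) := by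
    apply summable_of_sum_range_le
      (c := 2 * (M - J' (θ N)))
      (fun i => mul_nonneg (hα _).le (sq_nonneg _))
    intro n
    have tele : ∑ i ∈ Finset.range n, 2 * (J' (θ (i + N + 1)) - J' (θ (i + N)))
        = 2 * (J' (θ (n + N)) - J' (θ N)) := by
      rw [← Finset.mul_sum]
      congr 1
      have := Finset.sum_range_sub (fun k => J' (θ (k + N))) n
      simpa [Nat.add_right_comm] using this
    calc ∑ i ∈ Finset.range n, α (i + N) * ‖g (θ (i + N))‖ ^ 2
        ≤ ∑ i ∈ Finset.range n, 2 * (J' (θ (i + N + 1)) - J' (θ (i + N))) := by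
          apply Finset.sum_le_sum
          intro i _
          exact step2 (i + N) (Nat.le_add_left N i)
      _ = 2 * (J' (θ (n + N)) - J' (θ N)) := tele
      _ ≤ 2 * (M - J' (θ N)) := by nlinarith [hbdd (θ (n + N))]
  exact (summable_nat_add_iff N).1 htail
end

section
/- (Theorem 1: convergence of gradient ascent with Robbins–Monro step sizes.) Let E be a real inner product space (e.g., ℝ^d), let J' : E → ℝ be differentiable with L-Lipschitz gradient (L > 0) and bounded above, let the positive step sizes (αᵢ)_{i ∈ ℕ} satisfy the Robbins–Monro conditions ∑_{i} αᵢ = ∞ and ∑_{i} αᵢ² < ∞, and let the iterates satisfy θ^{i+1} = θ^i + αᵢ • ∇J'(θ^i). Then the gradient norms converge to a stationary value along a subsequence: liminf_{i → ∞} ‖∇J'(θ^i)‖ = 0. -/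
set_option maxHeartbeats 1000000

open Filter Topology InnerProductSpace

open Filter Topology InnerProductSpace

lemma fderiv_apply_eq_inner_gradient {E : Type*} [NormedAddCommGroup E]
    [InnerProductSpace ℝ E] [CompleteSpace E] (f : E → ℝ) (x v : E) :
    fderiv ℝ f x v = ⟪gradient f x, v⟫_ℝ := by
  rw [gradient]
  simp [InnerProductSpace.toDual_apply_apply]

lemma descent_lemma {E : Type*} [NormedAddCommGroup E]
    [InnerProductSpace ℝ E] [CompleteSpace E]
    (f : E → ℝ) (hf : Differentiable ℝ f) (L : ℝ) (hL : 0 ≤ L)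
    (hLip : ∀ x y : E, ‖gradient f x - gradient f y‖ ≤ L * ‖x - y‖)
    (x v : E) :
    f x + ⟪gradient f x, v⟫_ℝ - L / 2 * ‖v‖ ^ 2 ≤ f (x + v) := by
  set g := gradient f x with hg
  set ψ : ℝ → ℝ := fun t => f (x + t • v) - t * ⟪g, v⟫_ℝ + L / 2 * t ^ 2 * ‖v‖ ^ 2 with hψ
  have hγ : ∀ t : ℝ, HasDerivAt (fun t : ℝ => x + t • v) v t := by
    intro t
    simpa using ((hasDerivAt_id t).smul_const v).const_add x
  have hψ' : ∀ t : ℝ, HasDerivAt ψ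
      (⟪gradient f (x + t • v), v⟫_ℝ - ⟪g, v⟫_ℝ + L / 2 * (2 * t) * ‖v‖ ^ 2) t := by
    intro t
    have h1 : HasDerivAt (fun t : ℝ => f (x + t • v)) (⟪gradient f (x + t • v), v⟫_ℝ) t := by
      have := (hf (x + t • v)).hasFDerivAt.comp_hasDerivAt t (hγ t)
      rw [fderiv_apply_eq_inner_gradient] at this; exact this
    have h2 : HasDerivAt (fun t : ℝ => t * ⟪g, v⟫_ℝ) (⟪g, v⟫_ℝ) t := by
      simpa using (hasDerivAt_id t).mul_const (⟪g, v⟫_ℝ)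
    have h3 : HasDerivAt (fun t : ℝ => L / 2 * t ^ 2 * ‖v‖ ^ 2) (L / 2 * (2 * t) * ‖v‖ ^ 2) t := by
      have := ((hasDerivAt_pow 2 t).const_mul (L / 2)).mul_const (‖v‖ ^ 2)
      simpa [mul_comm, mul_assoc, mul_left_comm] using this
    exact (h1.sub h2).add h3
  have hmono : MonotoneOn ψ (Set.Icc (0:ℝ) 1) := by
    apply monotoneOn_of_deriv_nonneg (convex_Icc 0 1)
    · exact Continuous.continuousOn (by
        have : Continuous ψ := by
          apply Continuous.add
          · exact ((hf.continuous.comp (by continuity)).sub (continuous_id.mul continuous_const))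
          · continuity
        exact this)
    · intro t ht
      exact ((hψ' t).differentiableAt).differentiableWithinAt
    · intro t ht
      rw [interior_Icc] at ht
      rw [(hψ' t).deriv]
      have hinner : ⟪gradient f (x + t • v) - g, v⟫_ℝ ≥ -(L * t * ‖v‖ ^ 2) := by
        have h1 : |⟪gradient f (x + t • v) - g, v⟫_ℝ| ≤ ‖gradient f (x + t • v) - g‖ * ‖v‖ :=
          abs_real_inner_le_norm _ _
        have h2 : ‖gradient f (x + t • v) - g‖ ≤ L * ‖t • v‖ := by
          simpa using hLip (x + t • v) x
        have h3 : ‖t • v‖ = t * ‖v‖ := by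
          rw [norm_smul, Real.norm_eq_abs, abs_of_pos ht.1]
        rw [h3] at h2
        have h4 : ‖gradient f (x + t • v) - g‖ * ‖v‖ ≤ t * ‖v‖ * ‖v‖ * L := by
          nlinarith [norm_nonneg v]
        have h5 : ⟪gradient f (x + t • v) - g, v⟫_ℝ ≥ -(t * ‖v‖ * ‖v‖ * L) := by
          have := neg_abs_le (⟪gradient f (x + t • v) - g, v⟫_ℝ)
          linarith
        nlinarith [h5]
      have := inner_sub_left (𝕜 := ℝ) (gradient f (x + t • v)) g v
      nlinarith [hinner]
  have h01 := hmono (Set.mem_Icc.mpr ⟨le_refl 0, zero_le_one⟩) (Set.mem_Icc.mpr ⟨zero_le_one, le_refl 1⟩) zero_le_one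
  simp only [hψ, zero_smul, add_zero, one_smul, zero_mul, zero_pow, one_pow, mul_one,
    sub_zero, mul_zero] at h01
  linarith [h01]

/-- Theorem 1: convergence of gradient ascent with Robbins–Monro step
sizes: Let `E` be a real inner product space, `J' : E → ℝ` differentiable with
`L`-Lipschitz gradient (`L > 0`) and bounded above, positive step sizes `(αᵢ)` with
`∑ αᵢ = ∞` and `∑ αᵢ² < ∞`, and iterates `θ (i+1) = θ i + αᵢ • ∇J'(θ i)`. Then the
gradient norms converge to a stationary value along a subsequence:
`liminf_{i→∞} ‖∇J'(θ i)‖ = 0`. -/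
theorem gradient_ascent_liminf_zero {E : Type*} [NormedAddCommGroup E]
    [InnerProductSpace ℝ E] [CompleteSpace E]
    (J' : E → ℝ) (hJ' : Differentiable ℝ J')
    (L : ℝ) (hL : 0 < L)
    (hLip : ∀ θ θ' : E, ‖gradient J' θ - gradient J' θ'‖ ≤ L * ‖θ - θ'‖)
    (M : ℝ) (hbdd : ∀ θ : E, J' θ ≤ M)
    (α : ℕ → ℝ) (hα : ∀ i, 0 < α i)
    (hα1 : Filter.Tendsto (fun n => ∑ i ∈ Finset.range n, α i) Filter.atTop Filter.atTop)
    (hα2 : Summable (fun i => (α i) ^ 2))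
    (θ : ℕ → E)
    (hiter : ∀ i, θ (i + 1) = θ i + α i • gradient J' (θ i)) :
    Filter.liminf (fun i => ‖gradient J' (θ i)‖) Filter.atTop = 0 := by
  set g : ℕ → E := fun i => gradient J' (θ i) with hgdef
  -- step sizes tend to zero
  have hα0 : Tendsto α atTop (𝓝 0) := by
    have h2 := hα2.tendsto_atTop_zero
    have h3 : Tendsto (fun i => Real.sqrt ((α i) ^ 2)) atTop (𝓝 (Real.sqrt 0)) :=
      (Real.continuous_sqrt.tendsto 0).comp h2
    have heq : (fun i => Real.sqrt ((α i) ^ 2)) = α := by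
      funext i; rw [Real.sqrt_sq (hα i).le]
    rw [heq, Real.sqrt_zero] at h3
    exact h3
  obtain ⟨N, hN⟩ : ∃ N, ∀ i ≥ N, α i ≤ 1 / L := by
    have := hα0.eventually (eventually_lt_nhds (show (0:ℝ) < 1 / L by positivity))
    obtain ⟨N, hN⟩ := this.exists_forall_of_atTop
    exact ⟨N, fun i hi => (hN i hi).le⟩
  -- one-step improvement
  have hstep : ∀ i ≥ N, J' (θ i) + α i / 2 * ‖g i‖ ^ 2 ≤ J' (θ (i + 1)) := by
    intro i hi
    have hd := descent_lemma J' hJ' L hL.le hLip (θ i) (α i • g i)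
    rw [← hiter i] at hd
    have e1 : ⟪g i, α i • g i⟫_ℝ = α i * ‖g i‖ ^ 2 := by
      rw [real_inner_smul_right, real_inner_self_eq_norm_sq]
    have e2 : ‖α i • g i‖ ^ 2 = α i ^ 2 * ‖g i‖ ^ 2 := by
      rw [norm_smul, Real.norm_eq_abs, mul_pow, sq_abs]
    rw [e1, e2] at hd
    have hαi := hN i hi
    have hαp := hα i
    have h1 : α i * L ≤ 1 := by
      rw [le_div_iff₀ hL] at hαi; linarith
    have h2 : 0 ≤ α i * ‖g i‖ ^ 2 * (1 - α i * L) :=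
      mul_nonneg (mul_nonneg hαp.le (sq_nonneg _)) (by linarith)
    nlinarith [h2]
  -- partial sums of gains are bounded
  have hsum : ∀ n, J' (θ N) + ∑ i ∈ Finset.range n, α (N + i) / 2 * ‖g (N + i)‖ ^ 2
      ≤ J' (θ (N + n)) := by
    intro n
    induction n with
    | zero => simp
    | succ n ih =>
      rw [Finset.sum_range_succ]
      have := hstep (N + n) (Nat.le_add_right N n)
      calc J' (θ N) + (∑ i ∈ Finset.range n, α (N + i) / 2 * ‖g (N + i)‖ ^ 2
            + α (N + n) / 2 * ‖g (N + n)‖ ^ 2)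
          ≤ J' (θ (N + n)) + α (N + n) / 2 * ‖g (N + n)‖ ^ 2 := by linarith
        _ ≤ J' (θ (N + n + 1)) := this
        _ = J' (θ (N + (n + 1))) := by ring_nf
  have hb : Summable (fun i => α (N + i) / 2 * ‖g (N + i)‖ ^ 2) := by
    apply summable_of_sum_range_le (c := M - J' (θ N))
    · intro n
      have := (hα (N + n)).le
      positivity
    · intro n
      have := hsum n
      have := hbdd (θ (N + n))
      linarith
  have hS : Summable (fun i => α i * ‖g i‖ ^ 2) := by
    rw [← summable_nat_add_iff N]
    have := hb.mul_left 2
    refine this.congr fun i => ?_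
    rw [add_comm i N]; ring
  -- key frequently claim
  have hfreq : ∀ ε : ℝ, 0 < ε → ∃ᶠ i in atTop, ‖g i‖ < ε := by
    intro ε hε
    by_contra hcon
    rw [not_frequently] at hcon
    simp only [not_lt] at hcon
    obtain ⟨N', hN'⟩ := hcon.exists_forall_of_atTop
    have hSα : Summable α := by
      rw [← summable_nat_add_iff N']
      refine Summable.of_nonneg_of_le (g := fun i => α (i + N'))
        (f := fun i => ε⁻¹ ^ 2 * (α (i + N') * ‖g (i + N')‖ ^ 2))
        (fun i => (hα _).le) (fun i => ?_)
        ((((summable_nat_add_iff N').mpr hS)).mul_left _)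
      have h1 : ε ≤ ‖g (i + N')‖ := hN' (i + N') (Nat.le_add_left N' i)
      have h2 : ε ^ 2 ≤ ‖g (i + N')‖ ^ 2 := by nlinarith
      have hαp := (hα (i + N')).le
      rw [inv_pow]
      calc α (i + N') = α (i + N') * (ε ^ 2 / ε ^ 2) := by
            rw [div_self (by positivity)]; ring
        _ ≤ α (i + N') * (‖g (i + N')‖ ^ 2 / ε ^ 2) := by
            apply mul_le_mul_of_nonneg_left _ hαp
            apply div_le_div_of_nonneg_right h2 (by positivity)
        _ = (ε ^ 2)⁻¹ * (α (i + N') * ‖g (i + N')‖ ^ 2) := by ring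
    have := hSα.hasSum.tendsto_sum_nat
    exact not_tendsto_atTop_of_tendsto_nhds this hα1
  -- conclude
  have hbdbelow : Filter.IsBoundedUnder (· ≥ ·) atTop (fun i => ‖g i‖) :=
    Filter.isBoundedUnder_of ⟨0, fun i => norm_nonneg _⟩
  have hub : Filter.liminf (fun i => ‖g i‖) atTop ≤ 0 := by
    apply le_of_forall_pos_le_add
    intro ε hε
    rw [zero_add]
    exact Filter.liminf_le_of_frequently_le ((hfreq ε hε).mono fun i h => h.le) hbdbelow
  have hlb : (0:ℝ) ≤ Filter.liminf (fun i => ‖g i‖) atTop := by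
    apply Filter.le_liminf_of_le
    · exact Filter.IsCoboundedUnder.of_frequently_le ((hfreq 1 one_pos).mono fun i h => h.le)
    · exact Filter.Eventually.of_forall fun i => norm_nonneg _
  exact le_antisymm hub hlb
end
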